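/- arXiv:2105.12758 — 2 statements merged into one kernel-verified Lean document; each statement's English description precedes it below -/
import Mathlib

section
/- Let Π be an orthogonal projection and ρ a density operator with p := Tr[Πρ] > 0. Then (1/2)‖ρ − ΠρΠ/p‖₁ ≤ √(1 − p), where ‖·‖₁ is the trace norm (gentle measurement lemma for projections). -/
open ComplexOrder

/-- The square root of a positive semidefinite matrix, as `Matrix.PosSemidef.sqrt` was defined
in the older Mathlib (removed since). -/
noncomputable def posSemidefSqrt {n : Type*} [Fintype n] [DecidableEq n]
    {A : Matrix n n ℂ} (hA : A.PosSemidef) : Matrix n n ℂ :=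
  (hA.isHermitian.eigenvectorUnitary : Matrix n n ℂ) *
    Matrix.diagonal ((↑) ∘ (√·) ∘ hA.isHermitian.eigenvalues) *
    (star hA.isHermitian.eigenvectorUnitary : Matrix n n ℂ)

/-- The trace norm `‖A‖₁ = Tr[√(AᴴA)]` of a complex matrix. -/
noncomputable def traceNorm {n : Type*} [Fintype n] [DecidableEq n]
    (A : Matrix n n ℂ) : ℝ :=
  ((posSemidefSqrt (Matrix.posSemidef_conjTranspose_mul_self A)).trace).re

/-!
Write `ρ = AᴴA` and `ΠρΠ / p = BᴴB` with `B = AΠ / √p`. The trace norm of the Hermitian matrix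
`Δ = AᴴA - BᴴB` is `Re Tr[QΔ]` for `Q = sign Δ`, a Hermitian contraction, and
`Re Tr[QΔ] = Re Tr[(A + B) Q (A - B)ᴴ]`. Cauchy–Schwarz for the Hilbert–Schmidt inner product
bounds this by `‖A - B‖₂ ‖A + B‖₂`. As `‖A‖₂ = ‖B‖₂ = 1` and `Re ⟪A, B⟫ = √p`, the product is
`√((2 - 2√p)(2 + 2√p)) = 2√(1 - p)`.
-/

lemma sqrt_two_sub_mul_sqrt_two_add (c : ℝ) :
    √(2 - 2 * c) * √(2 + 2 * c) = 2 * √(1 - c ^ 2) := by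
  have hmul : √(2 - 2 * c) * √(2 + 2 * c) = √((2 - 2 * c) * (2 + 2 * c)) := by
    rcases le_total c 1 with hc | hc
    exacts [(Real.sqrt_mul (by linarith) _).symm, (Real.sqrt_mul' _ (by linarith)).symm]
  rw [hmul, show (2 - 2 * c) * (2 + 2 * c) = 2 ^ 2 * (1 - c ^ 2) by ring,
    Real.sqrt_mul (by positivity), Real.sqrt_sq zero_le_two]

namespace Matrix

variable {n : Type*} [Fintype n]

lemma re_trace_mul_conjTranspose_comm (A B : Matrix n n ℂ) :
    (A * Bᴴ).trace.re = (B * Aᴴ).trace.re := by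
  rw [← conjTranspose_conjTranspose A, ← conjTranspose_mul, trace_conjTranspose,
    conjTranspose_conjTranspose, Complex.star_def, Complex.conj_re]

lemma re_trace_add_mul_conjTranspose_add (A B : Matrix n n ℂ) :
    ((A + B) * (A + B)ᴴ).trace.re =
      (A * Aᴴ).trace.re + 2 * (B * Aᴴ).trace.re + (B * Bᴴ).trace.re := by
  have h := re_trace_mul_conjTranspose_comm A B
  simp only [conjTranspose_add, add_mul, mul_add, trace_add, Complex.add_re]
  linarith

lemma re_trace_sub_mul_conjTranspose_sub (A B : Matrix n n ℂ) :
    ((A - B) * (A - B)ᴴ).trace.re =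
      (A * Aᴴ).trace.re - 2 * (B * Aᴴ).trace.re + (B * Bᴴ).trace.re := by
  have h := re_trace_mul_conjTranspose_comm A B
  simp only [conjTranspose_sub, sub_mul, mul_sub, trace_sub, Complex.sub_re]
  linarith

/-- The cross terms of `(A + B) Q (A - B)ᴴ` are `z - conj z`, so only the diagonal ones survive
in the real part. -/
lemma re_trace_mul_conjTranspose_mul_sub {Q : Matrix n n ℂ} (hQ : Q.IsHermitian)
    (A B : Matrix n n ℂ) :
    (Q * (Aᴴ * A - Bᴴ * B)).trace.re = ((A + B) * Q * (A - B)ᴴ).trace.re := by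
  have hcross : (B * Q * Aᴴ).trace = star (A * Q * Bᴴ).trace := by
    rw [← trace_conjTranspose, conjTranspose_mul, conjTranspose_mul, hQ.eq,
      conjTranspose_conjTranspose, mul_assoc]
  have hexp : (A + B) * Q * (A - B)ᴴ = A * Q * Aᴴ - A * Q * Bᴴ + B * Q * Aᴴ - B * Q * Bᴴ := by
    rw [conjTranspose_sub]
    noncomm_ring
  rw [hexp, mul_sub, trace_sub, ← mul_assoc, trace_mul_cycle, ← mul_assoc Q, trace_mul_cycle Q Bᴴ B]
  simp only [trace_sub, trace_add, hcross, Complex.sub_re, Complex.add_re, Complex.star_def,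
    Complex.conj_re]
  ring

variable [DecidableEq n]

open scoped MatrixOrder

lemma posSemidefSqrt_eq_cfcSqrt {A : Matrix n n ℂ} (hA : A.PosSemidef) :
    posSemidefSqrt hA = CFC.sqrt A := by
  rw [CFC.sqrt_eq_cfc, cfc_nnreal_eq_real _ A, hA.1.cfc_eq, IsHermitian.cfc,
    Unitary.conjStarAlgAut_apply, posSemidefSqrt]
  congr 3
  funext i
  simp only [Function.comp, Real.coe_sqrt, Real.coe_toNNReal _ (hA.eigenvalues_nonneg i)]
  rfl

lemma traceNorm_eq_re_trace_cfcAbs (A : Matrix n n ℂ) : traceNorm A = (CFC.abs A).trace.re := by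
  rw [traceNorm, posSemidefSqrt_eq_cfcSqrt, CFC.abs, star_eq_conjTranspose]

lemma IsHermitian.exists_traceNorm_eq_re_trace_mul {Δ : Matrix n n ℂ} (hΔ : Δ.IsHermitian) :
    ∃ Q : Matrix n n ℂ, Q.IsHermitian ∧ (1 - Q * Q).PosSemidef ∧
      traceNorm Δ = (Q * Δ).trace.re := by
  have hΔ' : IsSelfAdjoint Δ := hΔ
  have hsign : ContinuousOn Real.sign (spectrum ℝ Δ) := finite_real_spectrum.continuousOn _
  refine ⟨cfc Real.sign Δ, cfc_predicate _ Δ, ?_, ?_⟩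
  · rw [← nonneg_iff_posSemidef, ← cfc_mul _ _ Δ, ← cfc_one ℝ Δ, ← cfc_sub _ _ Δ]
    refine cfc_nonneg fun x _ => ?_
    rcases Real.sign_apply_eq x with h | h | h <;> simp [h]
  · have hmul : cfc Real.sign Δ * Δ = cfc (fun x => Real.sign x * x) Δ := by
      rw [cfc_mul _ _ Δ, cfc_id' ℝ Δ]
    rw [traceNorm_eq_re_trace_cfcAbs, CFC.abs_eq_cfc_norm Δ, hmul]
    congr 3
    funext x
    rcases lt_trichotomy x 0 with h | h | h
    · simp [Real.sign_of_neg h, abs_of_neg h]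
    · simp [h]
    · simp [Real.sign_of_pos h, abs_of_pos h]

lemma re_trace_mul_conjTranspose_le (X Y : Matrix n n ℂ) :
    (Y * Xᴴ).trace.re ≤ √(X * Xᴴ).trace.re * √(Y * Yᴴ).trace.re := by
  let := (1 : Matrix n n ℂ).toMatrixSeminormedAddCommGroup PosSemidef.one
  let := (1 : Matrix n n ℂ).toMatrixInnerProductSpace PosSemidef.one
  have hinner (X Y : Matrix n n ℂ) : inner ℂ X Y = (Y * Xᴴ).trace := by
    change (Y * 1 * Xᴴ).trace = _
    rw [mul_one]
  have hnorm : ∀ X : Matrix n n ℂ, √(X * Xᴴ).trace.re = ‖X‖ := fun X => by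
    rw [norm_eq_sqrt_re_inner (𝕜 := ℂ), hinner]; rfl
  rw [← hinner, hnorm, hnorm]
  exact re_inner_le_norm (𝕜 := ℂ) X Y

lemma re_trace_mul_mul_conjTranspose_le {Q : Matrix n n ℂ} (hQ : Q.IsHermitian)
    (hQ1 : (1 - Q * Q).PosSemidef) (Y : Matrix n n ℂ) :
    (Y * Q * (Y * Q)ᴴ).trace.re ≤ (Y * Yᴴ).trace.re := by
  have hexp : Y * (1 - Q * Q) * Yᴴ = Y * Yᴴ - Y * Q * (Y * Q)ᴴ := by
    rw [conjTranspose_mul, hQ.eq]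
    noncomm_ring
  have h := (hQ1.mul_mul_conjTranspose_same Y).trace_nonneg
  rw [hexp, trace_sub] at h
  simpa using (Complex.le_def.mp h).1

lemma traceNorm_conjTranspose_mul_self_sub_le (A B : Matrix n n ℂ) :
    traceNorm (Aᴴ * A - Bᴴ * B) ≤
      √((A - B) * (A - B)ᴴ).trace.re * √((A + B) * (A + B)ᴴ).trace.re := by
  obtain ⟨Q, hQ, hQ1, hnorm⟩ :=
    ((isHermitian_conjTranspose_mul_self A).sub
      (isHermitian_conjTranspose_mul_self B)).exists_traceNorm_eq_re_trace_mul
  calc traceNorm (Aᴴ * A - Bᴴ * B) = ((A + B) * Q * (A - B)ᴴ).trace.re := by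
        rw [hnorm, re_trace_mul_conjTranspose_mul_sub hQ]
    _ ≤ √((A - B) * (A - B)ᴴ).trace.re * √((A + B) * Q * ((A + B) * Q)ᴴ).trace.re :=
        re_trace_mul_conjTranspose_le _ _
    _ ≤ √((A - B) * (A - B)ᴴ).trace.re * √((A + B) * (A + B)ᴴ).trace.re := by
        gcongr ?_ * √?_
        exact re_trace_mul_mul_conjTranspose_le hQ hQ1 _

lemma traceNorm_conjTranspose_mul_self_sub_le_two_mul_sqrt {A B : Matrix n n ℂ}
    (hA : (A * Aᴴ).trace.re = 1) (hB : (B * Bᴴ).trace.re = 1) :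
    traceNorm (Aᴴ * A - Bᴴ * B) ≤ 2 * √(1 - (B * Aᴴ).trace.re ^ 2) := by
  have h := traceNorm_conjTranspose_mul_self_sub_le A B
  rw [re_trace_sub_mul_conjTranspose_sub, re_trace_add_mul_conjTranspose_add, hA, hB] at h
  rw [← sqrt_two_sub_mul_sqrt_two_add]
  convert h using 3 <;> ring

end Matrix

open Matrix in
/-- gentle measurement lemma for projections: for an orthogonal
projection `P` and a density operator `ρ` with `p := Tr[P ρ] > 0`,
`(1/2) ‖ρ − PρP / p‖₁ ≤ √(1 − p)`. -/
theorem gentle_measurement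
    {n : Type*} [Fintype n] [DecidableEq n]
    (P ρ : Matrix n n ℂ)
    (hidem : P * P = P) (hsa : P.conjTranspose = P)
    (hρ : ρ.PosSemidef) (htr : ρ.trace = 1)
    (p : ℝ) (hp : p = ((P * ρ).trace).re) (hppos : 0 < p) :
    (1 / 2) * traceNorm (ρ - ((p : ℂ)⁻¹ • (P * ρ * P))) ≤ Real.sqrt (1 - p) := by
  open scoped MatrixOrder in
  obtain ⟨A, rfl⟩ := CStarAlgebra.nonneg_iff_eq_star_mul_self.mp hρ.nonneg
  rw [star_eq_conjTranspose] at htr hp ⊢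
  set s := √p
  have hss : s * s = p := Real.mul_self_sqrt hppos.le
  set B : Matrix n n ℂ := s⁻¹ • (A * P)
  have hAPA : (A * P * Aᴴ).trace.re = p := by rw [hp, ← trace_mul_cycle, mul_assoc]
  have hσ : (p : ℂ)⁻¹ • (P * (Aᴴ * A) * P) = Bᴴ * B := by
    rw [conjTranspose_smul, star_trivial, smul_mul_smul, conjTranspose_mul, hsa, ← mul_inv,
      hss, ← Complex.coe_smul, Complex.ofReal_inv]
    simp only [mul_assoc]
  have hAA : (A * Aᴴ).trace.re = 1 := by rw [trace_mul_comm, htr, Complex.one_re]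
  have hBB : (B * Bᴴ).trace.re = 1 := by
    rw [conjTranspose_smul, star_trivial, smul_mul_smul, ← mul_inv, hss, trace_smul,
      Complex.smul_re, conjTranspose_mul, hsa, ← mul_assoc, mul_assoc A, hidem, hAPA,
      smul_eq_mul, inv_mul_cancel₀ hppos.ne']
  have hBA : (B * Aᴴ).trace.re = s := by
    rw [smul_mul, trace_smul, Complex.smul_re, hAPA, ← hss, smul_eq_mul,
      inv_mul_cancel_left₀ (Real.sqrt_pos.mpr hppos).ne']
  calc (1 / 2) * traceNorm (Aᴴ * A - (p : ℂ)⁻¹ • (P * (Aᴴ * A) * P))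
      = (1 / 2) * traceNorm (Aᴴ * A - Bᴴ * B) := by rw [hσ]
    _ ≤ (1 / 2) * (2 * √(1 - s ^ 2)) := by
        gcongr
        exact hBA ▸ traceNorm_conjTranspose_mul_self_sub_le_two_mul_sqrt hAA hBB
    _ = √(1 - p) := by rw [sq, hss]; ring
end

section
/- Let N : L(H_A) → L(H_B) be a completely positive trace-preserving map whose Hilbert–Schmidt adjoint N† satisfies N†(Π_B) ≥ Π_A, where Π_A and Π_B are the group-average projectors of finite groups represented on A and B respectively. If σ_A is a density operator with σ_A = Π_A σ_A Π_A, then N(σ_A) satisfies N(σ_A) = Π_B N(σ_A) Π_B. -/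
open ComplexOrder

/-- A linear map between matrix algebras is completely positive if all its
ancilla-extensions `N ⊗ id_k` preserve positive semi-definiteness. -/
def IsCompletelyPositive {A B : Type*} [Fintype A] [DecidableEq A]
    [Fintype B] [DecidableEq B]
    (N : Matrix A A ℂ →ₗ[ℂ] Matrix B B ℂ) : Prop :=
  ∀ (k : ℕ) (X : Matrix (A × Fin k) (A × Fin k) ℂ), X.PosSemidef →
    (Matrix.of fun (bi bj : B × Fin k) =>
      N (Matrix.of fun a a' => X (a, bi.2) (a', bj.2)) bi.1 bj.1).PosSemidef

/-!
The channel output `S = N σ` is positive semidefinite, and the two hypotheses on `σ` and on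
`N†(Π_B)` give `Tr S = Tr (Π_A σ) ≤ Tr (N†(Π_B) σ) = Tr (Π_B S)`. Hence the positive matrix
`(1 - Π_B) S (1 - Π_B)` has trace `Tr S - Tr (Π_B S) ≤ 0`, so it vanishes, which forces
`S (1 - Π_B) = 0`, i.e. `S = Π_B S Π_B`.
-/

namespace Matrix

variable {n 𝕜 : Type*} [Fintype n] [RCLike 𝕜]

open scoped MatrixOrder

lemma PosSemidef.trace_mul_nonneg [DecidableEq n] {M S : Matrix n n 𝕜}
    (hM : M.PosSemidef) (hS : S.PosSemidef) : 0 ≤ (M * S).trace := by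
  have hsqrt : (CFC.sqrt S)ᴴ = CFC.sqrt S := (CFC.sqrt_nonneg S).isSelfAdjoint
  have hconj : ((CFC.sqrt S)ᴴ * M * CFC.sqrt S).trace = (M * S).trace := by
    rw [hsqrt, trace_mul_cycle, CFC.sqrt_mul_sqrt_self S hS.nonneg, trace_mul_comm]
  exact hconj ▸ (hM.conjTranspose_mul_mul_same _).trace_nonneg

lemma PosSemidef.mul_eq_zero_of_trace_conjTranspose_mul_mul_eq_zero [DecidableEq n] {m : Type*}
    [Fintype m] {S : Matrix n n 𝕜} {B : Matrix n m 𝕜} (hS : S.PosSemidef)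
    (h : (Bᴴ * S * B).trace = 0) : S * B = 0 := by
  have hsqrt : (CFC.sqrt S)ᴴ = CFC.sqrt S := (CFC.sqrt_nonneg S).isSelfAdjoint
  have hsq : CFC.sqrt S * CFC.sqrt S = S := CFC.sqrt_mul_sqrt_self S hS.nonneg
  have hroot : CFC.sqrt S * B = 0 := by
    rw [← trace_conjTranspose_mul_self_eq_zero_iff, conjTranspose_mul, hsqrt, ← Matrix.mul_assoc,
      Matrix.mul_assoc Bᴴ, hsq, h]
  rw [← hsq, Matrix.mul_assoc, hroot, Matrix.mul_zero]

lemma PosSemidef.proj_mul_mul_proj_eq_self_of_trace_le [DecidableEq n] {S P : Matrix n n 𝕜}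
    (hS : S.PosSemidef) (hP : IsStarProjection P) (h : S.trace ≤ (P * S).trace) :
    P * S * P = S := by
  have hQ := hP.one_sub
  have hQ_herm : (1 - P)ᴴ = 1 - P := hQ.isSelfAdjoint
  have htrace : ((1 - P)ᴴ * S * (1 - P)).trace = S.trace - (P * S).trace := by
    rw [hQ_herm, trace_mul_cycle, hQ.isIdempotentElem.eq, sub_mul, one_mul, trace_sub]
  have hzero : ((1 - P)ᴴ * S * (1 - P)).trace = 0 :=
    le_antisymm (htrace ▸ sub_nonpos.2 h) (hS.conjTranspose_mul_mul_same _).trace_nonneg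
  have hSP : S * P = S := by
    have := hS.mul_eq_zero_of_trace_conjTranspose_mul_mul_eq_zero hzero
    rwa [mul_sub, mul_one, sub_eq_zero, eq_comm] at this
  have hPS : P * S = S := by
    have hP_herm : Pᴴ = P := hP.isSelfAdjoint
    simpa only [conjTranspose_mul, hP_herm, hS.isHermitian.eq]
      using congrArg (fun M => Mᴴ) hSP
  rw [hPS, hSP]

end Matrix

lemma IsCompletelyPositive.map_posSemidef {A B : Type*} [Fintype A] [DecidableEq A]
    [Fintype B] [DecidableEq B] {N : Matrix A A ℂ →ₗ[ℂ] Matrix B B ℂ}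
    (hN : IsCompletelyPositive N) {X : Matrix A A ℂ} (hX : X.PosSemidef) : (N X).PosSemidef :=
  (hN 1 _ (hX.submatrix Prod.fst)).submatrix fun b => (b, 0)

theorem bose_symmetric_channel_preserves_bose_symmetry_general
    {A B : Type*} [Fintype A] [DecidableEq A] [Fintype B] [DecidableEq B]
    (N : Matrix A A ℂ →ₗ[ℂ] Matrix B B ℂ)
    (hCP : IsCompletelyPositive N)
    (hTP : ∀ X, (N X).trace = X.trace)
    (Nadj : Matrix B B ℂ →ₗ[ℂ] Matrix A A ℂ)
    (hadj : ∀ (X : Matrix B B ℂ) (Y : Matrix A A ℂ),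
      (X.conjTranspose * N Y).trace = ((Nadj X).conjTranspose * Y).trace)
    (PA : Matrix A A ℂ) (PB : Matrix B B ℂ)
    (hPA : PA * PA = PA ∧ PA.conjTranspose = PA)
    (hPB : PB * PB = PB ∧ PB.conjTranspose = PB)
    (hord : (Nadj PB - PA).PosSemidef)
    (σ : Matrix A A ℂ) (hσ : σ.PosSemidef)
    (hσsym : σ = PA * σ * PA) :
    N σ = PB * N σ * PB := by
  have hPAσ : PA * σ = σ := by rw [hσsym, ← mul_assoc, ← mul_assoc, hPA.1]
  have hNadj_herm : (Nadj PB).IsHermitian := by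
    simpa only [sub_add_cancel] using hord.isHermitian.add (hPA.2 : PA.IsHermitian)
  refine ((hCP.map_posSemidef hσ).proj_mul_mul_proj_eq_self_of_trace_le
    (isStarProjection_iff'.2 hPB) ?_).symm
  calc (N σ).trace = (PA * σ).trace := by rw [hTP, hPAσ]
    _ ≤ (Nadj PB * σ).trace := by
      rw [← sub_nonneg, ← Matrix.trace_sub, ← Matrix.sub_mul]
      exact hord.trace_mul_nonneg hσ
    _ = (PB * N σ).trace := by rw [← hNadj_herm.eq, ← hadj, hPB.2]

/-- If a quantum channel `N` satisfies `N†(P_B) ≥ P_A` for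
orthogonal projections `P_A, P_B`, then `N` maps Bose-symmetric states to
Bose-symmetric states: `σ = P_A σ P_A` implies `N(σ) = P_B N(σ) P_B`. -/
theorem bose_symmetric_channel_preserves_bose_symmetry
    {A B : Type*} [Fintype A] [DecidableEq A] [Fintype B] [DecidableEq B]
    (N : Matrix A A ℂ →ₗ[ℂ] Matrix B B ℂ)
    (hCP : IsCompletelyPositive N)
    (hTP : ∀ X, (N X).trace = X.trace)
    (Nadj : Matrix B B ℂ →ₗ[ℂ] Matrix A A ℂ)
    (hadj : ∀ (X : Matrix B B ℂ) (Y : Matrix A A ℂ),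
      (X.conjTranspose * N Y).trace = ((Nadj X).conjTranspose * Y).trace)
    (PA : Matrix A A ℂ) (PB : Matrix B B ℂ)
    (hPA : PA * PA = PA ∧ PA.conjTranspose = PA)
    (hPB : PB * PB = PB ∧ PB.conjTranspose = PB)
    (hord : (Nadj PB - PA).PosSemidef)
    (σ : Matrix A A ℂ) (hσ : σ.PosSemidef) (htr : σ.trace = 1)
    (hσsym : σ = PA * σ * PA) :
    N σ = PB * N σ * PB :=
  bose_symmetric_channel_preserves_bose_symmetry_general N hCP hTP Nadj hadj PA PB hPA hPB hord σ hσ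
    hσsym
end
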